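/- Let s and T be positive integers and let a : Fin (3*s) → ℕ satisfy 4 * a i > T and 2 * a i < T for every i, and ∑_{i} a i = s * T. Suppose S : Fin s → Finset (Fin (3*s)) is a family of pairwise disjoint sets whose union is all of Fin (3*s), such that ∑_{i ∈ S b} (a i + 1) ≤ T + 3 for every b. Then for every b, the set S b has exactly 3 elements and ∑_{i ∈ S b} a i = T; in particular the family S is a solution of the 3-Partition instance (a, T). -/

import Mathlib

/-!
Since the buckets partition the items, the bucket totals `∑ (a i + 1)` add up to
`s * T + 3 * s = s * (T + 3)`; as none exceeds `T + 3`, each equals `T + 3`. In a bucket with `k`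
items and value sum `σ = T + 3 - k`, the bounds `T < 4 a i` and `2 a i < T` give
`k (T + 1) ≤ 4 σ` and `2 σ + k ≤ k T`, which force `k = 3` and hence `σ = T`.
-/

open Finset

theorem sum_sum_eq_sum_of_disjoint_of_cover {ι κ M : Type*} [Fintype ι] [Fintype κ]
    [AddCommMonoid M] (S : κ → Finset ι) (hdisj : ∀ b b', b ≠ b' → Disjoint (S b) (S b'))
    (hcover : ∀ i, ∃ b, i ∈ S b) (f : ι → M) :
    ∑ b, ∑ i ∈ S b, f i = ∑ i, f i := by
  classical
  have hunion : univ.biUnion S = univ :=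
    eq_univ_of_forall fun i ↦ by simpa only [mem_biUnion, mem_univ, true_and] using hcover i
  rw [← sum_biUnion fun b _ b' _ ↦ hdisj b b', hunion]

theorem eq_of_le_of_sum_eq_card_nsmul {κ M : Type*} [Fintype κ] [AddCommMonoid M]
    [PartialOrder M] [IsOrderedCancelAddMonoid M] {f : κ → M} {c : M} (hle : ∀ b, f b ≤ c)
    (hsum : ∑ b, f b = Fintype.card κ • c) (b : κ) : f b = c := by
  rw [← card_univ, ← sum_const] at hsum
  exact (sum_eq_sum_iff_of_le fun b _ ↦ hle b).1 hsum b (mem_univ b)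

theorem eq_three_of_bucket_bounds {k σ T : ℕ} (hlow : k * (T + 1) ≤ 4 * σ)
    (hhigh : 2 * σ + k ≤ k * T) (htotal : σ + k = T + 3) : k = 3 := by
  have hk_le : k ≤ 3 := by nlinarith
  have hk_ge : 3 ≤ k := by nlinarith
  omega

theorem card_eq_three_and_sum_eq_of_sum_succ_eq {ι : Type*} (t : Finset ι) (a : ι → ℕ) {T : ℕ}
    (hlow : ∀ i, 4 * a i > T) (hhigh : ∀ i, 2 * a i < T) (hbucket : ∑ i ∈ t, (a i + 1) = T + 3) :
    #t = 3 ∧ ∑ i ∈ t, a i = T := by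
  have htotal : ∑ i ∈ t, a i + #t = T + 3 := by
    simpa only [sum_add_distrib, sum_const, smul_eq_mul, mul_one] using hbucket
  have hlow_sum : #t * (T + 1) ≤ 4 * ∑ i ∈ t, a i := by
    rw [mul_sum, ← smul_eq_mul]
    exact card_nsmul_le_sum _ _ _ fun i _ ↦ hlow i
  have hhigh_sum : 2 * ∑ i ∈ t, a i + #t ≤ #t * T := by
    have := sum_le_card_nsmul t (fun i ↦ 2 * a i + 1) T fun i _ ↦ hhigh i
    simpa only [sum_add_distrib, ← mul_sum, sum_const, smul_eq_mul, mul_one] using this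
  have hcard := eq_three_of_bucket_bounds hlow_sum hhigh_sum htotal
  exact ⟨hcard, by omega⟩

theorem soundness_core_general (s T : ℕ)
    (a : Fin (3 * s) → ℕ)
    (hlow : ∀ i, 4 * a i > T) (hhigh : ∀ i, 2 * a i < T)
    (hsum : ∑ i, a i = s * T)
    (S : Fin s → Finset (Fin (3 * s)))
    (hdisj : ∀ b b', b ≠ b' → Disjoint (S b) (S b'))
    (hcover : ∀ i, ∃ b, i ∈ S b)
    (hle : ∀ b, ∑ i ∈ S b, (a i + 1) ≤ T + 3) :
    ∀ b, (S b).card = 3 ∧ ∑ i ∈ S b, a i = T := by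
  have htotal : ∑ b, ∑ i ∈ S b, (a i + 1) = Fintype.card (Fin s) • (T + 3) := by
    rw [sum_sum_eq_sum_of_disjoint_of_cover S hdisj hcover, sum_add_distrib, hsum]
    simp only [sum_const, card_univ, Fintype.card_fin, smul_eq_mul]
    ring
  intro b
  exact card_eq_three_and_sum_eq_of_sum_succ_eq (S b) a hlow hhigh
    (eq_of_le_of_sum_eq_card_nsmul hle htotal b)

theorem soundness_core (s T : ℕ) (hs : 0 < s) (hT : 0 < T)
    (a : Fin (3 * s) → ℕ)
    (hlow : ∀ i, 4 * a i > T) (hhigh : ∀ i, 2 * a i < T)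
    (hsum : ∑ i, a i = s * T)
    (S : Fin s → Finset (Fin (3 * s)))
    (hdisj : ∀ b b', b ≠ b' → Disjoint (S b) (S b'))
    (hcover : ∀ i, ∃ b, i ∈ S b)
    (hle : ∀ b, ∑ i ∈ S b, (a i + 1) ≤ T + 3) :
    ∀ b, (S b).card = 3 ∧ ∑ i ∈ S b, a i = T :=
  soundness_core_general s T a hlow hhigh hsum S hdisj hcover hle
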